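/- Let A be a Poisson algebra over k whose underlying ring is a regular local k-algebra of Krull dimension ℓ with regular system of parameters x_1,…,x_ℓ, and suppose dx_1,…,dx_ℓ is a free A-basis of the module of Kähler differentials Ω_A. Write d{x_i,x_j} = Σ_{k=1}^{ℓ} a_{ijk} dx_k with a_{ijk} ∈ A. Define δ : A → A by the condition δ(a)·(dx_1∧⋯∧dx_ℓ) = Σ_{i=1}^{ℓ} (−1)^{i+1} d({a,x_i}) ∧ dx_1∧⋯∧(dx_i omitted)∧⋯∧dx_ℓ in ⋀^ℓ_A Ω_A. Then δ is a Poisson derivation of A, and δ(x_i) = Σ_{j=1}^{ℓ} a_{ijj} for each i = 1,…,ℓ. -/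

import Mathlib

/-! The basis `dx_i` of `Ω_A` has a dual family of derivations `∂_i` (partial derivatives): every
derivation `θ` satisfies `θ = ∑ θ(x_i) ∂_i`, and the `∂_i` commute because their commutator kills
every `x_i`. Evaluating the defining identity of `δ` with the determinant of the basis gives
`δ(c) = ∑ ∂_i{c, x_i}`, the divergence of the Hamiltonian derivation of `c`. The Leibniz rule for
`δ` follows by expanding, and compatibility with the bracket from the Jacobi identity: the cross
terms `∑_{i,j} ∂_j{w, x_i} ∂_i{u, x_j}` are symmetric in `u, w` and cancel. -/

/-- A Poisson algebra structure on a commutative `k`-algebra `A`: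
a `k`-bilinear Lie bracket satisfying the Leibniz rule. -/
structure PoissonAlgebra (k A : Type*) [CommRing k] [CommRing A] [Algebra k A] where
  br : A →ₗ[k] A →ₗ[k] A
  skew : ∀ a b, br a b = - br b a
  jacobi : ∀ a b c, br a (br b c) + br b (br c a) + br c (br a b) = 0
  leibniz : ∀ a b c, br (a * b) c = a * br b c + br a c * b

/-- A left Poisson module structure on an `A`-module `M`, with bracket `br a m = {a, m}`. -/
structure LeftPMod {k A : Type*} [CommRing k] [CommRing A] [Algebra k A]
    (P : PoissonAlgebra k A) (M : Type*) [AddCommGroup M] [Module k M] [Module A M]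
    [IsScalarTower k A M] where
  br : A →ₗ[k] M →ₗ[k] M
  lie : ∀ a b m, br (P.br a b) m = br a (br b m) - br b (br a m)
  mul : ∀ a b m, br (a * b) m = a • br b m + b • br a m
  act : ∀ a b m, br a (b • m) = P.br a b • m + b • br a m

/-- A right Poisson module structure on an `A`-module `M`, with bracket `br m a = {m, a}`. -/
structure RightPMod {k A : Type*} [CommRing k] [CommRing A] [Algebra k A]
    (P : PoissonAlgebra k A) (M : Type*) [AddCommGroup M] [Module k M] [Module A M]
    [IsScalarTower k A M] where
  br : M →ₗ[k] A →ₗ[k] M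
  lie : ∀ m a b, br m (P.br a b) = br (br m a) b - br (br m b) a
  mul : ∀ m a b, br m (a * b) = a • br m b + b • br m a
  act : ∀ b m a, br (b • m) a = P.br b a • m + b • br m a

/-- A Poisson derivation of a Poisson algebra. -/
structure PoissonDerivation {k A : Type*} [CommRing k] [CommRing A] [Algebra k A]
    (P : PoissonAlgebra k A) where
  d : A →ₗ[k] A
  leibniz : ∀ a b, d (a * b) = a * d b + d a * b
  compat : ∀ a b, d (P.br a b) = P.br (d a) b + P.br a (d b)

/-- A log-Hamiltonian derivation is one of the form `a ↦ u⁻¹ * {u, a}` for a unit `u`. -/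
def PoissonDerivation.IsLogHamiltonian {k A : Type*} [CommRing k] [CommRing A] [Algebra k A]
    {P : PoissonAlgebra k A} (δ : PoissonDerivation P) : Prop :=
  ∃ u : Aˣ, ∀ a : A, (u : A) * δ.d a = P.br (u : A) a

section

open Function

theorem Module.Basis.det_update {ι R M : Type*} [Fintype ι] [DecidableEq ι] [CommRing R]
    [AddCommGroup M] [Module R M] (e : Module.Basis ι R M) (i : ι) (w : M) :
    e.det (update e i w) = e.repr w i := by
  change e.det.toMultilinearMap.toLinearMap e i w = e.coord i w
  congr 1
  refine e.ext fun j => ?_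
  rcases eq_or_ne j i with rfl | hji
  · simp [det_self]
  · simp only [MultilinearMap.toLinearMap_apply, coord_apply, repr_self,
      Finsupp.single_eq_of_ne hji.symm]
    exact e.det.map_eq_zero_of_eq _ (by simp [hji]) hji

theorem Module.Basis.eq_sum_repr_of_smul_ιMulti_eq {R M : Type*} [CommRing R] [AddCommGroup M]
    [Module R M] {n : ℕ} (e : Module.Basis (Fin n) R M) (w : Fin n → M) (r : R)
    (h : r • ExteriorAlgebra.ιMulti R n e = ∑ i, ExteriorAlgebra.ιMulti R n (update e i (w i))) :
    r = ∑ i, e.repr (w i) i := by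
  have := congrArg (ExteriorAlgebra.liftAlternating (update (fun _ => 0) n e.det)) h
  simpa only [map_smul, map_sum, ExteriorAlgebra.liftAlternating_apply_ιMulti, update_self,
    det_self, smul_eq_mul, mul_one, det_update] using this

end

namespace PoissonAlgebra

variable {k A : Type*} [CommRing k] [CommRing A] [Algebra k A] (P : PoissonAlgebra k A)

lemma br_one_left (a : A) : P.br 1 a = 0 := by
  simpa using P.leibniz 1 1 a

def ham (a : A) : Derivation k A A where
  toLinearMap := P.br a
  map_one_eq_zero' := by
    change P.br a 1 = 0
    rw [P.skew, br_one_left, neg_zero]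
  leibniz' u v := by
    change P.br a (u * v) = u * P.br a v + v * P.br a u
    rw [P.skew a (u * v), P.leibniz, P.skew a v, P.skew a u]
    ring

lemma br_br_left (u w c : A) :
    P.br (P.br u w) c = P.br u (P.br w c) - P.br w (P.br u c) := by
  have hskew : P.br w (P.br c u) = - P.br w (P.br u c) := by rw [P.skew c u, map_neg]
  linear_combination P.skew (P.br u w) c - P.jacobi u w c + hskew

end PoissonAlgebra

namespace KaehlerDifferential

variable {k A ι : Type*} [CommRing k] [CommRing A] [Algebra k A]

noncomputable def partialDer (b : Module.Basis ι A (Ω[A⁄k])) (i : ι) : Derivation k A A :=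
  (b.coord i).compDer (D k A)

lemma partialDer_apply (b : Module.Basis ι A (Ω[A⁄k])) (i : ι) (c : A) :
    partialDer b i c = b.repr (D k A c) i := rfl

variable {b : Module.Basis ι A (Ω[A⁄k])} {x : ι → A}

lemma partialDer_coord [DecidableEq ι] (hb : ∀ i, b i = D k A (x i)) (i t : ι) :
    partialDer b i (x t) = if t = i then 1 else 0 := by
  rw [partialDer_apply, ← hb, Module.Basis.repr_self, Finsupp.single_apply]

variable [Fintype ι]

lemma _root_.Derivation.eq_sum_partialDer (hb : ∀ i, b i = D k A (x i)) (θ : Derivation k A A)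
    (c : A) :
    θ c = ∑ j, partialDer b j c * θ (x j) := by
  conv_lhs => rw [← θ.liftKaehlerDifferential_comp_D c, ← b.sum_repr (D k A c)]
  simp only [map_sum, map_smul, hb, Derivation.liftKaehlerDifferential_comp_D, partialDer_apply,
    smul_eq_mul]

lemma partialDer_comm (hb : ∀ i, b i = D k A (x i)) (i j : ι) (c : A) :
    partialDer b i (partialDer b j c) = partialDer b j (partialDer b i c) := by
  classical
  have h := Derivation.eq_sum_partialDer hb ⁅partialDer b i, partialDer b j⁆ c
  simpa only [Derivation.commutator_apply, partialDer_coord hb, apply_ite,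
    Derivation.map_one_eq_zero, map_zero, ite_self, sub_self, mul_zero, Finset.sum_const_zero,
    sub_eq_zero] using h

end KaehlerDifferential

namespace PoissonAlgebra

open KaehlerDifferential

variable {k A ι : Type*} [CommRing k] [CommRing A] [Algebra k A] [Fintype ι]
  (P : PoissonAlgebra k A) (b : Module.Basis ι A (Ω[A⁄k])) (x : ι → A)

noncomputable def modularVectorField : A →ₗ[k] A :=
  ∑ i, (partialDer b i).toLinearMap ∘ₗ P.br.flip (x i)

lemma modularVectorField_apply (c : A) :
    P.modularVectorField b x c = ∑ i, partialDer b i (P.br c (x i)) := by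
  simp [modularVectorField, LinearMap.sum_apply]

variable {b x}

lemma br_eq_sum_partialDer (hb : ∀ i, b i = D k A (x i)) (u c : A) :
    P.br u c = ∑ j, partialDer b j c * P.br u (x j) :=
  (P.ham u).eq_sum_partialDer hb c

lemma modularVectorField_mul (hb : ∀ i, b i = D k A (x i)) (u v : A) :
    P.modularVectorField b x (u * v)
      = u * P.modularVectorField b x v + P.modularVectorField b x u * v := by
  have expand : ∀ i, partialDer b i (P.br (u * v) (x i))
      = u * partialDer b i (P.br v (x i)) + v * partialDer b i (P.br u (x i))
        + (partialDer b i u * P.br v (x i) + partialDer b i v * P.br u (x i)) := by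
    intro i
    rw [P.leibniz, map_add, Derivation.leibniz, Derivation.leibniz, smul_eq_mul, smul_eq_mul]
    ring
  simp only [modularVectorField_apply, expand, Finset.sum_add_distrib, ← Finset.mul_sum]
  rw [← P.br_eq_sum_partialDer hb v u, ← P.br_eq_sum_partialDer hb u v, P.skew v u]
  ring

lemma partialDer_br (hb : ∀ i, b i = D k A (x i)) (i : ι) (u y : A) :
    partialDer b i (P.br u y) = ∑ j, (partialDer b j y * partialDer b i (P.br u (x j))
      + partialDer b i (partialDer b j y) * P.br u (x j)) := by
  rw [P.br_eq_sum_partialDer hb u y, map_sum]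
  refine Finset.sum_congr rfl fun j _ => ?_
  rw [Derivation.leibniz, smul_eq_mul, smul_eq_mul]
  ring

lemma sum_partialDer_br_br (hb : ∀ i, b i = D k A (x i)) (u w : A) :
    ∑ i, partialDer b i (P.br u (P.br w (x i)))
      = P.br u (P.modularVectorField b x w)
        + ∑ i, ∑ j, partialDer b j (P.br w (x i)) * partialDer b i (P.br u (x j)) := by
  rw [Finset.sum_congr rfl fun i _ => P.partialDer_br hb i u _]
  simp only [Finset.sum_add_distrib]
  rw [add_comm]
  congr 1
  rw [P.br_eq_sum_partialDer hb u, modularVectorField_apply, Finset.sum_comm]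
  simp only [map_sum, Finset.sum_mul, partialDer_comm hb]

lemma modularVectorField_br (hb : ∀ i, b i = D k A (x i)) (u w : A) :
    P.modularVectorField b x (P.br u w)
      = P.br (P.modularVectorField b x u) w + P.br u (P.modularVectorField b x w) := by
  have hswap : ∑ i, ∑ j, partialDer b j (P.br w (x i)) * partialDer b i (P.br u (x j))
      = ∑ i, ∑ j, partialDer b j (P.br u (x i)) * partialDer b i (P.br w (x j)) := by
    rw [Finset.sum_comm]
    exact Finset.sum_congr rfl fun i _ => Finset.sum_congr rfl fun j _ => mul_comm _ _
  rw [modularVectorField_apply]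
  simp only [P.br_br_left u w, map_sub, Finset.sum_sub_distrib]
  rw [P.sum_partialDer_br_br hb, P.sum_partialDer_br_br hb, hswap, P.skew _ w]
  ring

noncomputable def modularDerivation (hb : ∀ i, b i = D k A (x i)) : PoissonDerivation P where
  d := P.modularVectorField b x
  leibniz := P.modularVectorField_mul hb
  compat := P.modularVectorField_br hb

end PoissonAlgebra

theorem stmt_13_general {k A : Type*} [Field k]
    [CommRing A] [Algebra k A] (P : PoissonAlgebra k A)
    (ℓ : ℕ)
    (x : Fin ℓ → A)
    (b : Module.Basis (Fin ℓ) A (Ω[A⁄k])) (hb : ∀ i, b i = KaehlerDifferential.D k A (x i))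
    (a : Fin ℓ → Fin ℓ → Fin ℓ → A)
    (ha : ∀ i j, KaehlerDifferential.D k A (P.br (x i) (x j)) = ∑ t, a i j t • b t)
    (δ : A → A)
    (hδ : ∀ c : A,
      δ c • ExteriorAlgebra.ιMulti A ℓ (fun i => KaehlerDifferential.D k A (x i))
        = ∑ i : Fin ℓ, ExteriorAlgebra.ιMulti A ℓ
            (Function.update (fun j => KaehlerDifferential.D k A (x j)) i
              (KaehlerDifferential.D k A (P.br c (x i))))) :
    (∃ D : PoissonDerivation P, ∀ c, D.d c = δ c) ∧
    (∀ i, δ (x i) = ∑ j, a i j j) := by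
  have hv : (fun i => KaehlerDifferential.D k A (x i)) = ⇑b := funext fun i => (hb i).symm
  have hδ_eq : ∀ c, δ c = P.modularVectorField b x c := fun c => by
    rw [P.modularVectorField_apply]
    exact b.eq_sum_repr_of_smul_ιMulti_eq _ _ (hv ▸ hδ c)
  refine ⟨⟨P.modularDerivation hb, fun c => (hδ_eq c).symm⟩, fun i => ?_⟩
  rw [hδ_eq, P.modularVectorField_apply]
  simp [KaehlerDifferential.partialDer_apply, ha, Finsupp.single_apply]

theorem stmt_13 {k A : Type*} [Field k] [IsAlgClosed k] [CharZero k]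
    [CommRing A] [Algebra k A] (P : PoissonAlgebra k A)
    [IsLocalRing A] [IsNoetherianRing A] (ℓ : ℕ)
    (hdim : ringKrullDim A = ℓ)
    (x : Fin ℓ → A) (hx : Ideal.span (Set.range x) = IsLocalRing.maximalIdeal A)
    (b : Module.Basis (Fin ℓ) A (Ω[A⁄k])) (hb : ∀ i, b i = KaehlerDifferential.D k A (x i))
    (a : Fin ℓ → Fin ℓ → Fin ℓ → A)
    (ha : ∀ i j, KaehlerDifferential.D k A (P.br (x i) (x j)) = ∑ t, a i j t • b t)
    (δ : A → A)
    (hδ : ∀ c : A,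
      δ c • ExteriorAlgebra.ιMulti A ℓ (fun i => KaehlerDifferential.D k A (x i))
        = ∑ i : Fin ℓ, ExteriorAlgebra.ιMulti A ℓ
            (Function.update (fun j => KaehlerDifferential.D k A (x j)) i
              (KaehlerDifferential.D k A (P.br c (x i))))) :
    (∃ D : PoissonDerivation P, ∀ c, D.d c = δ c) ∧
    (∀ i, δ (x i) = ∑ j, a i j j) :=
  stmt_13_general P ℓ x b hb a ha δ hδ
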